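/- Let X₁, X₂, … be independent unit-rate exponential random variables, γ ∈ (0,∞), and β_n = log(n/γ) − log log n. For all x ∈ ℝ and z ∈ ℝ, the sum of tail probabilities over the relevant indices converges to the limiting Poisson intensity of the corner set: Σ_{ i ≥ 1, (1 − i/n)·log n ≥ z } P( i^γ X_i / n^γ − β_n ≥ x ) → e^{−x − γz} as n → ∞. -/

import Mathlib

/-!
Put `L = x + β n`, so that `e^{-L} = γ e^{-x} log n / n`, and `i = n (1 - s)`. The `i`-th
probability is `exp (-L (1 - s)^{-γ})`, and `(1 - s)^{-γ} = 1 + γ s + O(s²)`; linearizing turns the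
sum into a geometric series in `k = n - i ≥ n z / log n` with ratio `e^{-γ L / n}`, whose value
`e^{-L} e^{-γ z L / log n} / (e^{γ L / n} - 1)` tends to `e^{-x-γz}`. Bernoulli's inequality
`(1 - s)^{-γ} ≥ 1 + γ s` makes the geometric series an upper bound. For the lower bound, keep only
`|s| ≤ log log n / log n`: there the quadratic error `L s²` tends to `0`, and the geometric tail
that is dropped tends to `0` as well.
-/

open MeasureTheory ProbabilityTheory Filter Real Finset Topology

namespace WeightedExponentialTail

theorem one_add_mul_le_one_sub_rpow_neg {γ s : ℝ} (hγ : 0 ≤ γ) (hs : s < 1) :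
    1 + γ * s ≤ (1 - s) ^ (-γ) := by
  have hlog : log (1 - s) ≤ -s := by linarith [log_le_sub_one_of_pos (sub_pos.mpr hs)]
  rw [rpow_def_of_pos (sub_pos.mpr hs)]
  nlinarith [add_one_le_exp (log (1 - s) * -γ)]

theorem one_sub_rpow_neg_le {γ s : ℝ} (hγ : 0 ≤ γ) (hs : |s| ≤ 1 / 2) (hγs : γ * |s| ≤ 1 / 2) :
    (1 - s) ^ (-γ) ≤ 1 + γ * s + (2 * γ + 4 * γ ^ 2) * s ^ 2 := by
  have hs2 : s ^ 2 = |s| ^ 2 := (sq_abs s).symm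
  have hlog : -log (1 - s) ≤ s + 2 * s ^ 2 := by
    have h := abs_log_sub_add_sum_range_le (hs.trans_lt (by norm_num)) 1
    norm_num at h
    have : s ^ 2 / (1 - |s|) ≤ 2 * s ^ 2 := by
      rw [div_le_iff₀ (by linarith)]; nlinarith [abs_nonneg s]
    linarith [neg_abs_le (s + log (1 - s))]
  set w := γ * (s + 2 * s ^ 2) with hw
  have hw_abs : |w| ≤ 2 * γ * |s| := by
    rw [hw, abs_mul, abs_of_nonneg hγ]
    have : |s + 2 * s ^ 2| ≤ 2 * |s| := by
      refine (abs_add_le _ _).trans ?_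
      rw [abs_of_nonneg (by positivity : (0:ℝ) ≤ 2 * s ^ 2)]
      nlinarith [abs_nonneg s]
    nlinarith
  have hexp : exp w ≤ 1 + w + w ^ 2 := by
    have := abs_exp_sub_one_sub_id_le (hw_abs.trans (by linarith))
    linarith [le_abs_self (exp w - 1 - w)]
  have hwsq : w ^ 2 ≤ 4 * γ ^ 2 * s ^ 2 := by
    rw [← sq_abs w, hs2]; nlinarith [abs_nonneg w]
  rw [rpow_def_of_pos (by linarith [le_abs_self s])]
  calc exp (log (1 - s) * -γ) ≤ exp w := exp_le_exp.mpr (by rw [hw]; nlinarith)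
    _ ≤ 1 + γ * s + (2 * γ + 4 * γ ^ 2) * s ^ 2 := by nlinarith

/-- For an integer `t ≥ 0` this is `∑_{k > t} e^{-L} e^{-γ L k / n}`, the tail of the geometric
series obtained by linearizing `exp (-L (n / i) ^ γ)` in `k = n - i`. -/
noncomputable def geomTail (γ L : ℝ) (n : ℕ) (t : ℝ) : ℝ :=
  exp (-L) / (exp (γ * L / n) - 1) * exp (-(γ * L * t / n))

section GeomTail

variable {γ L : ℝ} {n : ℕ}

theorem geomTail_nonneg (hγL : 0 < γ * L) (hn : 0 < n) (t : ℝ) : 0 ≤ geomTail γ L n t := by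
  have : 1 < exp (γ * L / n) := one_lt_exp_iff.mpr (by positivity)
  unfold geomTail
  have : 0 < exp (γ * L / n) - 1 := by linarith
  positivity

theorem sum_Ico_exp_neg_linear (hγL : γ * L ≠ 0) (hn : 0 < n) {a b : ℕ} (hab : a ≤ b) :
    ∑ i ∈ Ico a b, exp (-L) * exp (-(γ * L * (n - i) / n)) =
      geomTail γ L n (n - b) - geomTail γ L n (n - a) := by
  have hn' : (n : ℝ) ≠ 0 := by positivity
  have hq : exp (γ * L / n) ≠ 1 := by
    rw [Ne, exp_eq_one_iff]; exact div_ne_zero hγL hn'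
  have hpow : ∀ k : ℕ, exp (-(γ * L * (n - k) / n)) = exp (-(γ * L)) * exp (γ * L / n) ^ k := by
    intro k
    rw [← exp_nat_mul, ← exp_add]
    congr 1
    field_simp
    ring
  simp only [geomTail, hpow, ← mul_sum, geom_sum_Ico hq hab]
  field_simp

end GeomTail

section TermBounds

variable {γ L i n : ℝ}

theorem div_rpow_eq_one_sub_rpow_neg (hi : 0 < i) (hn : 0 < n) :
    (n / i) ^ γ = (1 - (n - i) / n) ^ (-γ) := by
  rw [show 1 - (n - i) / n = i / n by field_simp; ring, rpow_neg (by positivity),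
    ← inv_rpow (by positivity), inv_div]

theorem exp_neg_mul_div_rpow_le (hγ : 0 ≤ γ) (hL : 0 ≤ L) (hi : 0 < i) (hn : 0 < n) :
    exp (-(L * (n / i) ^ γ)) ≤ exp (-L) * exp (-(γ * L * (n - i) / n)) := by
  have hs : (n - i) / n < 1 := by rw [div_lt_one hn]; linarith
  have h := mul_le_mul_of_nonneg_left (one_add_mul_le_one_sub_rpow_neg hγ hs) hL
  rw [← exp_add, exp_le_exp, div_rpow_eq_one_sub_rpow_neg hi hn]
  have : γ * L * (n - i) / n = L * (γ * ((n - i) / n)) := by ring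
  linarith

theorem le_exp_neg_mul_div_rpow (hγ : 0 ≤ γ) (hL : 0 ≤ L) (hi : 0 < i) (hn : 0 < n) {δ : ℝ}
    (hs : |(n - i) / n| ≤ δ) (hδ : δ ≤ 1 / 2) (hγδ : γ * δ ≤ 1 / 2) :
    exp (-(L * (2 * γ + 4 * γ ^ 2) * δ ^ 2)) * (exp (-L) * exp (-(γ * L * (n - i) / n))) ≤
      exp (-(L * (n / i) ^ γ)) := by
  set s := (n - i) / n with hs_def
  have hγs : γ * |s| ≤ 1 / 2 := (mul_le_mul_of_nonneg_left hs hγ).trans hγδ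
  have hup := mul_le_mul_of_nonneg_left (one_sub_rpow_neg_le hγ (hs.trans hδ) hγs) hL
  have hsq : s ^ 2 ≤ δ ^ 2 := by
    rw [← sq_abs s]; exact pow_le_pow_left₀ (abs_nonneg s) hs 2
  have hsq' := mul_le_mul_of_nonneg_left hsq (by positivity : 0 ≤ L * (2 * γ + 4 * γ ^ 2))
  rw [← exp_add, ← exp_add, exp_le_exp, div_rpow_eq_one_sub_rpow_neg hi hn]
  have : γ * L * (n - i) / n = L * (γ * s) := by rw [hs_def]; ring
  nlinarith

end TermBounds

section SumBounds

variable {γ L : ℝ} {n : ℕ}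

theorem sum_Icc_exp_neg_mul_rpow_le (hγ : 0 < γ) (hL : 0 < L) (hn : 0 < n) (m : ℕ) :
    ∑ i ∈ Icc 1 m, exp (-(L * (n / i) ^ γ)) ≤ geomTail γ L n (n - (m + 1 : ℕ)) := by
  calc ∑ i ∈ Icc 1 m, exp (-(L * (n / i) ^ γ))
      ≤ ∑ i ∈ Icc 1 m, exp (-L) * exp (-(γ * L * (n - i) / n)) :=
        sum_le_sum fun i hi => exp_neg_mul_div_rpow_le hγ.le hL.le
          (by exact_mod_cast (mem_Icc.mp hi).1) (by exact_mod_cast hn)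
    _ ≤ ∑ i ∈ Ico 0 (m + 1), exp (-L) * exp (-(γ * L * (n - i) / n)) :=
        sum_le_sum_of_subset_of_nonneg (fun i hi => by simp at hi ⊢; omega)
          (fun _ _ _ => by positivity)
    _ = geomTail γ L n (n - (m + 1 : ℕ)) - geomTail γ L n (n - (0 : ℕ)) :=
        sum_Ico_exp_neg_linear (by positivity) hn (Nat.zero_le _)
    _ ≤ geomTail γ L n (n - (m + 1 : ℕ)) := by
        linarith [geomTail_nonneg (mul_pos hγ hL) hn (n - (0 : ℕ))]

theorem mul_geomTail_sub_le_sum_Icc (hγ : 0 < γ) (hL : 0 < L) (hn : 0 < n) {a m : ℕ}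
    (ha : 1 ≤ a) (ham : a ≤ m + 1) {δ : ℝ} (hδ : δ ≤ 1 / 2) (hγδ : γ * δ ≤ 1 / 2)
    (hs : ∀ i ∈ Icc a m, |((n : ℝ) - i) / n| ≤ δ) :
    exp (-(L * (2 * γ + 4 * γ ^ 2) * δ ^ 2)) *
        (geomTail γ L n (n - (m + 1 : ℕ)) - geomTail γ L n (n - a)) ≤
      ∑ i ∈ Icc 1 m, exp (-(L * (n / i) ^ γ)) := by
  rw [← sum_Ico_exp_neg_linear (by positivity) hn ham, Ico_add_one_right_eq_Icc, mul_sum]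
  calc ∑ i ∈ Icc a m, exp (-(L * (2 * γ + 4 * γ ^ 2) * δ ^ 2)) *
        (exp (-L) * exp (-(γ * L * (n - i) / n)))
      ≤ ∑ i ∈ Icc a m, exp (-(L * (n / i) ^ γ)) :=
        sum_le_sum fun i hi => le_exp_neg_mul_div_rpow hγ.le hL.le
          (by exact_mod_cast ha.trans (mem_Icc.mp hi).1) (by exact_mod_cast hn) (hs i hi) hδ hγδ
    _ ≤ ∑ i ∈ Icc 1 m, exp (-(L * (n / i) ^ γ)) :=
        sum_le_sum_of_subset_of_nonneg (Icc_subset_Icc_left ha) (fun _ _ _ => by positivity)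

end SumBounds

theorem tendsto_log_natCast_atTop : Tendsto (fun n : ℕ => log n) atTop atTop :=
  tendsto_log_atTop.comp tendsto_natCast_atTop_atTop

theorem tendsto_log_pow_div_atTop (k : ℕ) : Tendsto (fun y : ℝ => log y ^ k / y) atTop (𝓝 0) := by
  simpa using tendsto_pow_log_div_mul_add_atTop 1 0 k one_ne_zero

theorem tendsto_log_natCast_div : Tendsto (fun n : ℕ => log n / n) atTop (𝓝 0) := by
  simpa [Function.comp_def] using (tendsto_log_pow_div_atTop 1).comp tendsto_natCast_atTop_atTop

theorem tendsto_log_log_div_log : Tendsto (fun n : ℕ => log (log n) / log n) atTop (𝓝 0) := by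
  simpa [Function.comp_def] using (tendsto_log_pow_div_atTop 1).comp tendsto_log_natCast_atTop

theorem tendsto_log_mul_log_log_div_log_sq :
    Tendsto (fun n : ℕ => log n * (log (log n) / log n) ^ 2) atTop (𝓝 0) := by
  refine ((tendsto_log_pow_div_atTop 2).comp tendsto_log_natCast_atTop).congr' ?_
  filter_upwards [tendsto_log_natCast_atTop.eventually_gt_atTop 0] with n hn
  simp only [Function.comp]
  field_simp

theorem tendsto_div_exp_sub_one : Tendsto (fun u : ℝ => u / (exp u - 1)) (𝓝[>] 0) (𝓝 1) := by
  have h := (hasDerivAt_exp 0).tendsto_slope_zero_right.inv₀ (by simp)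
  simp only [zero_add, exp_zero, smul_eq_mul, inv_one] at h
  exact h.congr fun u => by rw [mul_inv, inv_inv, div_eq_mul_inv]

theorem tendsto_log_mul_sub_floor_add_one_div (z : ℝ) :
    Tendsto (fun n : ℕ => log n * (n - (⌊n * (1 - z / log n)⌋₊ + 1 : ℕ)) / n) atTop (𝓝 z) := by
  have hbounds : ∀ᶠ n : ℕ in atTop,
      z - log n / n ≤ log n * (n - (⌊n * (1 - z / log n)⌋₊ + 1 : ℕ)) / n ∧
        log n * (n - (⌊n * (1 - z / log n)⌋₊ + 1 : ℕ)) / n ≤ z := by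
    filter_upwards [eventually_gt_atTop 0, tendsto_log_natCast_atTop.eventually_gt_atTop z,
      tendsto_log_natCast_atTop.eventually_gt_atTop 0] with n hn hzℓ hℓ
    have hn' : (0 : ℝ) < n := by exact_mod_cast hn
    set y := (n : ℝ) * (1 - z / log n)
    have hy : 0 ≤ y := mul_nonneg hn'.le (by rw [sub_nonneg, div_le_one hℓ]; exact hzℓ.le)
    have hfrac : 0 ≤ (⌊y⌋₊ + 1 : ℕ) - y ∧ (⌊y⌋₊ + 1 : ℕ) - y ≤ 1 := by
      push_cast
      constructor <;> linarith [Nat.floor_le hy, Nat.lt_floor_add_one y]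
    have heq : log n * (n - (⌊y⌋₊ + 1 : ℕ)) / n = z - log n * ((⌊y⌋₊ + 1 : ℕ) - y) / n := by
      simp only [y]; field_simp; ring
    rw [heq]
    constructor
    · have := mul_le_of_le_one_right hℓ.le hfrac.2
      gcongr
    · have : 0 ≤ log n * ((⌊y⌋₊ + 1 : ℕ) - y) / n := by have := hfrac.1; positivity
      linarith
  exact tendsto_of_tendsto_of_tendsto_of_le_of_le'
    (by simpa using tendsto_log_natCast_div.const_sub z) tendsto_const_nhds
    (hbounds.mono fun _ h => h.1) (hbounds.mono fun _ h => h.2)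

theorem tendsto_log_mul_sub_ceil_div_atTop {δ : ℕ → ℝ}
    (hδ : Tendsto (fun n : ℕ => log n * δ n) atTop atTop) (hδ1 : ∀ᶠ n in atTop, δ n ≤ 1) :
    Tendsto (fun n : ℕ => log n * (n - ⌈n * (1 - δ n)⌉₊) / n) atTop atTop := by
  refine tendsto_atTop_mono' _ ?_ (hδ.atTop_add (tendsto_log_natCast_div.neg))
  filter_upwards [eventually_gt_atTop 0, tendsto_log_natCast_atTop.eventually_gt_atTop 0, hδ1]
    with n hn hℓ hδn
  have hn' : (0 : ℝ) < n := by exact_mod_cast hn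
  have hceil := Nat.ceil_lt_add_one (mul_nonneg hn'.le (sub_nonneg.mpr hδn))
  have heq : log n * δ n + -(log n / n) = log n * (n - (n * (1 - δ n) + 1)) / n := by
    field_simp; ring
  rw [heq]
  gcongr

theorem tendsto_atTop_of_tendsto_div_log {L : ℕ → ℝ}
    (hL : Tendsto (fun n : ℕ => L n / log n) atTop (𝓝 1)) : Tendsto L atTop atTop := by
  refine (hL.pos_mul_atTop one_pos tendsto_log_natCast_atTop).congr' ?_
  filter_upwards [tendsto_log_natCast_atTop.eventually_gt_atTop 0] with n hn
  field_simp

theorem geomTail_eq_mul_exp {γ L t : ℝ} {n : ℕ} (hℓ : log n ≠ 0) :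
    geomTail γ L n t =
      exp (-L) / (exp (γ * L / n) - 1) * exp (-(γ * (L / log n) * (log n * t / n))) := by
  unfold geomTail
  congr 3
  field_simp

section GeomTailLimits

variable {γ c : ℝ} {L : ℕ → ℝ}

theorem tendsto_exp_neg_div_exp_sub_one (hγ : 0 < γ)
    (hL : Tendsto (fun n : ℕ => L n / log n) atTop (𝓝 1))
    (hc : Tendsto (fun n : ℕ => n * exp (-L n) / (γ * log n)) atTop (𝓝 c)) :
    Tendsto (fun n : ℕ => exp (-L n) / (exp (γ * L n / n) - 1)) atTop (𝓝 c) := by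
  have hLpos := (tendsto_atTop_of_tendsto_div_log hL).eventually_gt_atTop 0
  have hu : Tendsto (fun n : ℕ => γ * L n / n) atTop (𝓝[>] 0) := by
    refine tendsto_nhdsWithin_iff.mpr ⟨?_, ?_⟩
    · have h := (hL.const_mul γ).mul tendsto_log_natCast_div
      rw [mul_one, mul_zero] at h
      refine h.congr' ?_
      filter_upwards [tendsto_log_natCast_atTop.eventually_gt_atTop 0] with n hℓ
      field_simp
    · filter_upwards [hLpos, eventually_gt_atTop 0] with n hLn hn
      exact div_pos (mul_pos hγ hLn) (Nat.cast_pos.mpr hn)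
  have h := (hc.mul (hL.inv₀ one_ne_zero)).mul (tendsto_div_exp_sub_one.comp hu)
  rw [inv_one, mul_one, mul_one] at h
  refine h.congr' ?_
  filter_upwards [hLpos, eventually_gt_atTop 0, tendsto_log_natCast_atTop.eventually_gt_atTop 0]
    with n hLn hn hℓ
  have hn' : (0 : ℝ) < n := Nat.cast_pos.mpr hn
  simp only [Function.comp]
  field_simp

theorem tendsto_geomTail (hγ : 0 < γ) (hL : Tendsto (fun n : ℕ => L n / log n) atTop (𝓝 1))
    (hc : Tendsto (fun n : ℕ => n * exp (-L n) / (γ * log n)) atTop (𝓝 c))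
    {t : ℕ → ℝ} {τ : ℝ} (ht : Tendsto (fun n : ℕ => log n * t n / n) atTop (𝓝 τ)) :
    Tendsto (fun n : ℕ => geomTail γ (L n) n (t n)) atTop (𝓝 (c * exp (-(γ * τ)))) := by
  have h := (tendsto_exp_neg_div_exp_sub_one hγ hL hc).mul
    ((continuous_exp.tendsto _).comp ((hL.const_mul γ).mul ht).neg)
  rw [mul_one] at h
  refine h.congr' ?_
  filter_upwards [tendsto_log_natCast_atTop.eventually_gt_atTop 0] with n hℓ
  rw [geomTail_eq_mul_exp hℓ.ne']
  rfl

theorem tendsto_geomTail_zero (hγ : 0 < γ) (hL : Tendsto (fun n : ℕ => L n / log n) atTop (𝓝 1))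
    (hc : Tendsto (fun n : ℕ => n * exp (-L n) / (γ * log n)) atTop (𝓝 c))
    {t : ℕ → ℝ} (ht : Tendsto (fun n : ℕ => log n * t n / n) atTop atTop) :
    Tendsto (fun n : ℕ => geomTail γ (L n) n (t n)) atTop (𝓝 0) := by
  have hexp : Tendsto (fun n : ℕ => exp (-(γ * (L n / log n) * (log n * t n / n)))) atTop (𝓝 0) :=
    tendsto_exp_atBot.comp (tendsto_neg_atTop_atBot.comp
      ((hL.const_mul γ).pos_mul_atTop (by simpa using hγ) ht))
  have h := (tendsto_exp_neg_div_exp_sub_one hγ hL hc).mul hexp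
  rw [mul_zero] at h
  refine h.congr' ?_
  filter_upwards [tendsto_log_natCast_atTop.eventually_gt_atTop 0] with n hℓ
  rw [geomTail_eq_mul_exp hℓ.ne']

end GeomTailLimits

theorem abs_sub_div_le_of_mem_Icc_ceil_floor {n : ℕ} (hn : 0 < n) {δ ε : ℝ} (hεδ : -δ ≤ ε)
    (hε : ε ≤ 1) {i : ℕ} (hi : i ∈ Icc ⌈n * (1 - δ)⌉₊ ⌊n * (1 - ε)⌋₊) :
    |((n : ℝ) - i) / n| ≤ δ := by
  have hn' : (0 : ℝ) < n := Nat.cast_pos.mpr hn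
  have h1 : n * (1 - δ) ≤ i := Nat.ceil_le.mp (mem_Icc.mp hi).1
  have h2 : (i : ℝ) ≤ n * (1 - ε) :=
    (Nat.le_floor_iff (mul_nonneg hn'.le (sub_nonneg.mpr hε))).mp (mem_Icc.mp hi).2
  rw [abs_le, le_div_iff₀ hn', div_le_iff₀ hn']
  constructor <;> nlinarith

theorem tendsto_sum_Icc_exp_neg_mul_rpow {γ c : ℝ} {L : ℕ → ℝ} (hγ : 0 < γ)
    (hL : Tendsto (fun n : ℕ => L n / log n) atTop (𝓝 1))
    (hc : Tendsto (fun n : ℕ => n * exp (-L n) / (γ * log n)) atTop (𝓝 c)) (z : ℝ) :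
    Tendsto (fun n : ℕ => ∑ i ∈ Icc 1 ⌊n * (1 - z / log n)⌋₊, exp (-(L n * (n / i) ^ γ)))
      atTop (𝓝 (c * exp (-(γ * z)))) := by
  -- wide enough for the dropped tail to vanish (`log n * δ n → ∞`), narrow enough for `L δ² → 0`
  set δ : ℕ → ℝ := fun n => log (log n) / log n
  have hδ : Tendsto δ atTop (𝓝 0) := tendsto_log_log_div_log
  have hℓδ : Tendsto (fun n : ℕ => log n * δ n) atTop atTop := by
    refine (tendsto_log_atTop.comp tendsto_log_natCast_atTop).congr' ?_
    filter_upwards [tendsto_log_natCast_atTop.eventually_gt_atTop 0] with n hℓ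
    simp only [Function.comp, δ]
    field_simp
  have hη : Tendsto (fun n : ℕ => exp (-(L n * (2 * γ + 4 * γ ^ 2) * δ n ^ 2))) atTop (𝓝 1) := by
    have h := ((hL.mul tendsto_log_mul_log_log_div_log_sq).const_mul (2 * γ + 4 * γ ^ 2)).neg
    rw [mul_zero, mul_zero, neg_zero] at h
    refine ((continuous_exp.tendsto 0).comp h).congr' ?_ |>.trans (by rw [exp_zero])
    filter_upwards [tendsto_log_natCast_atTop.eventually_gt_atTop 0] with n hℓ
    simp only [Function.comp, δ]
    field_simp
  have hLpos := (tendsto_atTop_of_tendsto_div_log hL).eventually_gt_atTop 0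
  have hupper := tendsto_geomTail hγ hL hc (tendsto_log_mul_sub_floor_add_one_div z)
  have hlower := hη.mul (hupper.sub (tendsto_geomTail_zero hγ hL hc
    (tendsto_log_mul_sub_ceil_div_atTop hℓδ (hδ.eventually (ge_mem_nhds one_pos)))))
  rw [one_mul, sub_zero] at hlower
  refine tendsto_of_tendsto_of_tendsto_of_le_of_le' hlower hupper ?_ ?_
  · filter_upwards [hLpos, eventually_gt_atTop 0, tendsto_log_natCast_atTop.eventually_gt_atTop 0,
      hδ.eventually (ge_mem_nhds (by norm_num : (0 : ℝ) < 1 / 2)),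
      hδ.eventually (ge_mem_nhds (by positivity : (0 : ℝ) < 1 / (2 * γ))),
      hℓδ.eventually_ge_atTop |z|] with n hLn hn hℓ hδ2 hδγ hzδ
    have hn' : (0 : ℝ) < n := Nat.cast_pos.mpr hn
    have hzℓ : |z| / log n ≤ δ n := by rw [div_le_iff₀ hℓ]; linarith
    have hεδ : -δ n ≤ z / log n := by
      have := div_le_div_of_nonneg_right (neg_abs_le z) hℓ.le
      rw [neg_div] at this
      linarith
    have hε : z / log n ≤ δ n := (div_le_div_of_nonneg_right (le_abs_self z) hℓ.le).trans hzℓ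
    have hγδ : γ * δ n ≤ 1 / 2 := by
      calc γ * δ n ≤ γ * (1 / (2 * γ)) := mul_le_mul_of_nonneg_left hδγ hγ.le
        _ = 1 / 2 := by field_simp
    exact mul_geomTail_sub_le_sum_Icc hγ hLn hn
      (Nat.one_le_ceil_iff.mpr (mul_pos hn' (by linarith)))
      ((Nat.ceil_mono (by gcongr)).trans (Nat.ceil_le_floor_add_one _)) hδ2 hγδ
      (fun i hi => abs_sub_div_le_of_mem_Icc_ceil_floor hn hεδ (by linarith) hi)
  · filter_upwards [hLpos, eventually_gt_atTop 0] with n hLn hn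
    exact sum_Icc_exp_neg_mul_rpow_le hγ hLn hn _

theorem tendsto_add_log_div_sub_log_log_div_log (x : ℝ) {γ : ℝ} (hγ : γ ≠ 0) :
    Tendsto (fun n : ℕ => (x + (log (n / γ) - log (log n))) / log n) atTop (𝓝 1) := by
  have h := (((tendsto_const_nhds (x := x - log γ)).div_atTop
    tendsto_log_natCast_atTop).const_add 1).sub tendsto_log_log_div_log
  rw [add_zero, sub_zero] at h
  refine h.congr' ?_
  filter_upwards [eventually_gt_atTop 0, tendsto_log_natCast_atTop.eventually_gt_atTop 0]
    with n hn hℓ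
  rw [log_div (Nat.cast_pos.mpr hn).ne' hγ]
  field_simp
  ring

theorem natCast_mul_exp_neg_add_log_div_sub_log_log (x : ℝ) {γ : ℝ} (hγ : 0 < γ) {n : ℕ}
    (hn : 0 < n) (hℓ : 0 < log n) :
    n * exp (-(x + (log (n / γ) - log (log n)))) / (γ * log n) = exp (-x) := by
  have hn' : (0 : ℝ) < n := Nat.cast_pos.mpr hn
  rw [neg_add, neg_sub, exp_add, exp_sub, exp_log hℓ, exp_log (by positivity)]
  field_simp

theorem setOf_le_one_sub_div_mul_log_eq_Icc {n : ℕ} (hn : 1 < n) (z : ℝ) :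
    {i : ℕ | 1 ≤ i ∧ z ≤ (1 - (i : ℝ) / n) * log n} = ↑(Icc 1 ⌊n * (1 - z / log n)⌋₊) := by
  have hn' : (0 : ℝ) < n := by positivity
  have hℓ : 0 < log n := log_pos (by exact_mod_cast hn)
  ext i
  simp only [coe_Icc, Set.mem_Icc, Set.mem_ofPred_eq]
  refine and_congr_right fun hi => ?_
  rw [Nat.le_floor_iff' (by omega), ← div_le_iff₀ hℓ, le_sub_comm, div_le_iff₀' hn']

section ExponentialTail

variable {Ω : Type*} [MeasurableSpace Ω] {μ : Measure Ω} {Y : Ω → ℝ}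

theorem measure_lt_eq_of_cdf_exp
    (hY : ∀ x : ℝ, 0 ≤ x → μ {ω | Y ω ≤ x} = ENNReal.ofReal (1 - exp (-x)))
    {t : ℝ} (ht : 0 ≤ t) : μ {ω | Y ω < t} = ENNReal.ofReal (1 - exp (-t)) := by
  refine le_antisymm ((measure_mono fun ω (h : Y ω < t) => h.le).trans (hY t ht).le) ?_
  rcases ht.eq_or_lt with rfl | ht
  · simp
  have hcont : Tendsto (fun s => ENNReal.ofReal (1 - exp (-s))) (𝓝[<] t)
      (𝓝 (ENNReal.ofReal (1 - exp (-t)))) := by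
    refine (ENNReal.continuous_ofReal.comp ?_).continuousAt.tendsto.mono_left nhdsWithin_le_nhds
    fun_prop
  refine le_of_tendsto hcont ?_
  filter_upwards [Ioo_mem_nhdsLT ht] with s hs
  rw [← hY s hs.1.le]
  exact measure_mono fun ω (h : Y ω ≤ s) => h.trans_lt hs.2

theorem measure_ge_toReal_eq_exp_neg [IsProbabilityMeasure μ] (hYm : Measurable Y)
    (hY : ∀ x : ℝ, 0 ≤ x → μ {ω | Y ω ≤ x} = ENNReal.ofReal (1 - exp (-x)))
    {t : ℝ} (ht : 0 ≤ t) : (μ {ω | t ≤ Y ω}).toReal = exp (-t) := by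
  have hcompl : {ω | t ≤ Y ω} = {ω | Y ω < t}ᶜ := by ext ω; simp
  rw [hcompl, prob_compl_eq_one_sub (measurableSet_lt hYm measurable_const),
    measure_lt_eq_of_cdf_exp hY ht, ENNReal.toReal_sub_of_le _ ENNReal.one_ne_top, ENNReal.toReal_ofReal]
  · simp
  · linarith [exp_le_one_iff.mpr (neg_nonpos.mpr ht)]
  · exact ENNReal.ofReal_le_one.mpr (by linarith [exp_pos (-t)])

end ExponentialTail

theorem setOf_le_rpow_mul_div_rpow_sub_eq {Ω : Type*} (Y : Ω → ℝ) {i n : ℝ} (hi : 0 < i)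
    (hn : 0 < n) (x b γ : ℝ) : {ω | x ≤ i ^ γ * Y ω / n ^ γ - b} = {ω | (x + b) * (n / i) ^ γ ≤ Y ω} := by
  ext ω
  simp only [Set.mem_ofPred_eq]
  rw [div_rpow hn.le hi.le, mul_div_assoc', div_le_iff₀ (rpow_pos_of_pos hi γ), le_sub_iff_add_le,
    le_div_iff₀ (rpow_pos_of_pos hn γ), mul_comm (i ^ γ)]

theorem tsum_indicator_tail_eq_sum_exp {Ω : Type*} [MeasurableSpace Ω] (μ : Measure Ω)
    [IsProbabilityMeasure μ] {X : ℕ → Ω → ℝ} (hXmeas : ∀ i, Measurable (X i))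
    (hXexp : ∀ i, ∀ x : ℝ, 0 ≤ x → μ {ω | X i ω ≤ x} = ENNReal.ofReal (1 - exp (-x)))
    {n : ℕ} (hn : 1 < n) {x b : ℝ} (hxb : 0 ≤ x + b) (γ z : ℝ) :
    ∑' i : ℕ, Set.indicator {i : ℕ | 1 ≤ i ∧ z ≤ (1 - (i : ℝ) / n) * log n}
        (fun i => (μ {ω | x ≤ (i : ℝ) ^ γ * X i ω / (n : ℝ) ^ γ - b}).toReal) i =
      ∑ i ∈ Icc 1 ⌊n * (1 - z / log n)⌋₊, exp (-((x + b) * (n / i) ^ γ)) := by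
  rw [setOf_le_one_sub_div_mul_log_eq_Icc hn, ← sum_eq_tsum_indicator]
  refine sum_congr rfl fun i hi => ?_
  rw [setOf_le_rpow_mul_div_rpow_sub_eq _ (by exact_mod_cast (mem_Icc.mp hi).1) (by positivity),
    measure_ge_toReal_eq_exp_neg (hXmeas i) (hXexp i) (by positivity)]

end WeightedExponentialTail

open WeightedExponentialTail in
theorem weighted_exponential_tail_sum_general
    {Ω : Type*} [MeasurableSpace Ω] (μ : Measure Ω) [IsProbabilityMeasure μ]
    (X : ℕ → Ω → ℝ)
    (hXmeas : ∀ i, Measurable (X i))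
    (hXexp : ∀ i, ∀ x : ℝ, 0 ≤ x →
      μ {ω | X i ω ≤ x} = ENNReal.ofReal (1 - Real.exp (-x)))
    (γ : ℝ) (hγ : 0 < γ)
    (β : ℕ → ℝ)
    (hβ : ∀ n, β n = Real.log ((n : ℝ) / γ) - Real.log (Real.log (n : ℝ))) :
    ∀ x z : ℝ,
      Tendsto
        (fun n : ℕ =>
          ∑' i : ℕ,
            Set.indicator
              {i : ℕ | 1 ≤ i ∧ z ≤ (1 - (i : ℝ) / (n : ℝ)) * Real.log (n : ℝ)}
              (fun i =>
                (μ {ω | x ≤ (i : ℝ) ^ γ * X i ω / (n : ℝ) ^ γ - β n}).toReal) i)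
        atTop
        (nhds (Real.exp (-x - γ * z))) := by
  intro x z
  have hL : Tendsto (fun n : ℕ => (x + β n) / log n) atTop (𝓝 1) := by
    simpa only [hβ] using tendsto_add_log_div_sub_log_log_div_log x hγ.ne'
  have hc : Tendsto (fun n : ℕ => n * exp (-(x + β n)) / (γ * log n)) atTop (𝓝 (exp (-x))) := by
    refine tendsto_const_nhds.congr' ?_
    filter_upwards [eventually_gt_atTop 0, tendsto_log_natCast_atTop.eventually_gt_atTop 0]
      with n hn hℓ
    rw [hβ, natCast_mul_exp_neg_add_log_div_sub_log_log x hγ hn hℓ]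
  have hsum := tendsto_sum_Icc_exp_neg_mul_rpow hγ hL hc z
  rw [← exp_add, ← sub_eq_add_neg] at hsum
  refine hsum.congr' ?_
  filter_upwards [eventually_gt_atTop 1,
    (tendsto_atTop_of_tendsto_div_log hL).eventually_ge_atTop 0] with n hn hxb
  exact (tsum_indicator_tail_eq_sum_exp μ hXmeas hXexp hn hxb γ z).symm

/-- For i.i.d. unit exponentials `X_i` and `γ > 0`, the sum of the
tail probabilities `P(i^γ X_i/n^γ - β_n ≥ x)` over indices `i ≥ 1` with
`(1 - i/n) log n ≥ z` converges to `e^{-x - γz}`. -/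
theorem weighted_exponential_tail_sum
    {Ω : Type*} [MeasurableSpace Ω] (μ : Measure Ω) [IsProbabilityMeasure μ]
    (X : ℕ → Ω → ℝ)
    (hXmeas : ∀ i, Measurable (X i))
    (hXindep : iIndepFun X μ)
    (hXexp : ∀ i, ∀ x : ℝ, 0 ≤ x →
      μ {ω | X i ω ≤ x} = ENNReal.ofReal (1 - Real.exp (-x)))
    (γ : ℝ) (hγ : 0 < γ)
    (β : ℕ → ℝ)
    (hβ : ∀ n, β n = Real.log ((n : ℝ) / γ) - Real.log (Real.log (n : ℝ))) :
    ∀ x z : ℝ,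
      Tendsto
        (fun n : ℕ =>
          ∑' i : ℕ,
            Set.indicator
              {i : ℕ | 1 ≤ i ∧ z ≤ (1 - (i : ℝ) / (n : ℝ)) * Real.log (n : ℝ)}
              (fun i =>
                (μ {ω | x ≤ (i : ℝ) ^ γ * X i ω / (n : ℝ) ^ γ - β n}).toReal) i)
        atTop
        (nhds (Real.exp (-x - γ * z))) :=
  weighted_exponential_tail_sum_general μ X hXmeas hXexp γ hγ β hβ
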